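/- arXiv:1805.00671 — 5 statements merged into one kernel-verified Lean document; each statement's English description precedes it below -/
import Mathlib

section
/- Let μ be a real 3×3 matrix, set A_j = Σ_{l=1}^{3} μ_{lj} A_l^co for j = 1,2,3 (6×6 matrices) and μ̃ = diag(μ, μ). Let u : ℝ³ → ℝ⁶ be twice continuously differentiable at x ∈ ℝ³. Then Σ_{j,k=1}^{3} Σ_{l=1}^{6} Σ_{p=1}^{6} μ̃_{lk} (A_j)_{lp} ∂_k∂_j u_p(x) = 0 and Σ_{j,k=1}^{3} Σ_{l=1}^{6} Σ_{p=1}^{6} μ̃_{l(k+3)} (A_j)_{lp} ∂_k∂_j u_p(x) = 0; that is, both components of the generalized divergence Div(A₁,A₂,A₃) applied to the generalized Maxwell operator Σ_j A_j ∂_j u vanish, so this divergence contains no second-order derivatives of u. -/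
/-!
Summing over `l`, the coefficient of `∂_k∂_j u_p` in either component is `(μᵀ T_p μ)_{kj}`,
where `(T_p)_{lm} = (A_m^co)_{e(l), p}` and `e` embeds `Fin 3` as the first or the second block.
Since `(J_m)_{lq} = -ε_{mlq}` is antisymmetric in `(m, l)`, `T_p` is skew-symmetric, hence so is
`μᵀ T_p μ`; contracted against the Hessian of `u`, which is symmetric by Schwarz, it gives `0`.
-/

open Matrix

noncomputable section

/-- The matrices `J₁, J₂, J₃`. -/
def Jmat : Fin 3 → Matrix (Fin 3) (Fin 3) ℝ
  | 0 => !![0,0,0; 0,0,-1; 0,1,0]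
  | 1 => !![0,0,1; 0,0,0; -1,0,0]
  | 2 => !![0,-1,0; 1,0,0; 0,0,0]

/-- The block matrices `A_j^co = [[0, −J_j],[J_j, 0]]`. -/
def Aco (j : Fin 3) : Matrix (Fin 6) (Fin 6) ℝ :=
  Matrix.reindex finSumFinEquiv finSumFinEquiv
    (Matrix.fromBlocks 0 (-(Jmat j)) (Jmat j) 0)

/-- The block diagonal matrix `μ̃ = diag(μ, μ)`. -/
def mtilde (μ : Matrix (Fin 3) (Fin 3) ℝ) : Matrix (Fin 6) (Fin 6) ℝ :=
  Matrix.reindex finSumFinEquiv finSumFinEquiv (Matrix.fromBlocks μ 0 0 μ)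

/-- The coefficients `A_j = Σ_l μ_{lj} A_l^co`. -/
def Amat (μ : Matrix (Fin 3) (Fin 3) ℝ) (j : Fin 3) : Matrix (Fin 6) (Fin 6) ℝ :=
  ∑ l : Fin 3, μ l j • Aco l

/-- The classical second partial derivative `∂_k ∂_j u_p (x)`. -/
def d2 (u : (Fin 3 → ℝ) → Fin 6 → ℝ) (x : Fin 3 → ℝ) (k j : Fin 3) (p : Fin 6) : ℝ :=
  fderiv ℝ (fun y => fderiv ℝ u y (Pi.single j 1)) x (Pi.single k 1) p

lemma Jmat_apply_swap (m l q : Fin 3) : Jmat l m q = -Jmat m l q := by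
  fin_cases m <;> fin_cases l <;> fin_cases q <;> norm_num [Jmat]

lemma Aco_castAdd_swap (m l : Fin 3) :
    Aco l (Fin.castAdd 3 m) = -Aco m (Fin.castAdd 3 l) := by
  ext p
  refine Fin.addCases (m := 3) (n := 3) (fun q => ?_) (fun q => ?_) p <;>
    simp only [Aco, reindex_apply, submatrix_apply, finSumFinEquiv_symm_apply_castAdd,
      finSumFinEquiv_symm_apply_natAdd, fromBlocks_apply₁₁, fromBlocks_apply₁₂, Pi.neg_apply,
      Matrix.neg_apply, Matrix.zero_apply, neg_zero, Jmat_apply_swap m l, neg_neg]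

lemma Aco_natAdd_swap (m l : Fin 3) :
    Aco l (Fin.natAdd 3 m) = -Aco m (Fin.natAdd 3 l) := by
  ext p
  refine Fin.addCases (m := 3) (n := 3) (fun q => ?_) (fun q => ?_) p <;>
    simp only [Aco, reindex_apply, submatrix_apply, finSumFinEquiv_symm_apply_castAdd,
      finSumFinEquiv_symm_apply_natAdd, fromBlocks_apply₂₁, fromBlocks_apply₂₂, Pi.neg_apply,
      Matrix.zero_apply, neg_zero, Jmat_apply_swap m l]

lemma sum_mtilde_castAdd_mul (μ : Matrix (Fin 3) (Fin 3) ℝ) (k : Fin 3) (v : Fin 6 → ℝ) :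
    ∑ l, mtilde μ l (Fin.castAdd 3 k) * v l = ∑ l, μ l k * v (Fin.castAdd 3 l) := by
  simp only [Fin.sum_univ_add (a := 3) (b := 3), mtilde, reindex_apply, submatrix_apply,
    finSumFinEquiv_symm_apply_castAdd, finSumFinEquiv_symm_apply_natAdd, fromBlocks_apply₁₁,
    fromBlocks_apply₂₁, Matrix.zero_apply, zero_mul, Finset.sum_const_zero, add_zero]

lemma sum_mtilde_natAdd_mul (μ : Matrix (Fin 3) (Fin 3) ℝ) (k : Fin 3) (v : Fin 6 → ℝ) :
    ∑ l, mtilde μ l (Fin.natAdd 3 k) * v l = ∑ l, μ l k * v (Fin.natAdd 3 l) := by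
  simp only [Fin.sum_univ_add (a := 3) (b := 3), mtilde, reindex_apply, submatrix_apply,
    finSumFinEquiv_symm_apply_castAdd, finSumFinEquiv_symm_apply_natAdd, fromBlocks_apply₁₂,
    fromBlocks_apply₂₂, Matrix.zero_apply, zero_mul, Finset.sum_const_zero, zero_add]

lemma Matrix.transpose_mul_mul_self_of_transpose_eq_neg {m n R : Type*} [Fintype n]
    [CommRing R] (μ : Matrix n m R) {T : Matrix n n R} (hT : Tᵀ = -T) :
    (μᵀ * T * μ)ᵀ = -(μᵀ * T * μ) := by
  simp [Matrix.transpose_mul, hT, Matrix.mul_assoc]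

lemma Finset.sum_sum_eq_zero_of_antisymm {ι M : Type*} [Fintype ι] [AddCommGroup M]
    [IsAddTorsionFree M] {f : ι → ι → M} (hf : ∀ j k, f k j = -f j k) :
    ∑ j, ∑ k, f j k = 0 := by
  refine self_eq_neg.mp ?_
  conv_lhs => rw [Finset.sum_comm]
  rw [← Finset.sum_neg_distrib]
  exact Finset.sum_congr rfl fun k _ => by
    rw [← Finset.sum_neg_distrib]
    exact Finset.sum_congr rfl fun j _ => hf k j

lemma d2_comm {u : (Fin 3 → ℝ) → Fin 6 → ℝ} {x : Fin 3 → ℝ} (hu : ContDiffAt ℝ 2 u x)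
    (k j : Fin 3) (p : Fin 6) : d2 u x k j p = d2 u x j k p := by
  have hd : DifferentiableAt ℝ (fderiv ℝ u) x :=
    (hu.fderiv_right (m := 1) (by norm_num)).differentiableAt one_ne_zero
  have hd2 (v w : Fin 3 → ℝ) :
      fderiv ℝ (fun y => fderiv ℝ u y v) x w = fderiv ℝ (fderiv ℝ u) x w v := by
    rw [fderiv_clm_apply hd (differentiableAt_const v)]
    simp
  simp only [d2, hd2, (hu.isSymmSndFDerivAt (by simp)).eq]

section

variable {μ : Matrix (Fin 3) (Fin 3) ℝ} {e : Fin 3 → Fin 6}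

lemma sum_mtilde_mul_Amat_mul
    (he : ∀ k (v : Fin 6 → ℝ), ∑ l, mtilde μ l (e k) * v l = ∑ l, μ l k * v (e l))
    (j k : Fin 3) (w : Fin 6 → ℝ) :
    ∑ l, ∑ p, mtilde μ l (e k) * Amat μ j l p * w p
      = ∑ p, (μᵀ * Matrix.of (fun l m => Aco m (e l) p) * μ) k j * w p := by
  rw [Finset.sum_comm]
  refine Finset.sum_congr rfl fun p _ => ?_
  rw [← Finset.sum_mul, he]
  simp only [Amat, Matrix.sum_apply, Matrix.smul_apply, smul_eq_mul, Matrix.mul_apply,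
    Matrix.transpose_apply, Matrix.of_apply, Finset.mul_sum, Finset.sum_mul]
  rw [Finset.sum_comm]
  exact Finset.sum_congr rfl fun _ _ => Finset.sum_congr rfl fun _ _ => by ring

lemma sum_mtilde_mul_Amat_mul_d2_eq_zero
    (he : ∀ k (v : Fin 6 → ℝ), ∑ l, mtilde μ l (e k) * v l = ∑ l, μ l k * v (e l))
    (hA : ∀ m l, Aco l (e m) = -Aco m (e l))
    {u : (Fin 3 → ℝ) → Fin 6 → ℝ} {x : Fin 3 → ℝ} (hu : ContDiffAt ℝ 2 u x) :
    ∑ j, ∑ k, ∑ l, ∑ p, mtilde μ l (e k) * Amat μ j l p * d2 u x k j p = 0 := by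
  refine Finset.sum_sum_eq_zero_of_antisymm fun j k => ?_
  rw [sum_mtilde_mul_Amat_mul he, sum_mtilde_mul_Amat_mul he, ← Finset.sum_neg_distrib]
  refine Finset.sum_congr rfl fun p _ => ?_
  have hskew : (Matrix.of fun l m => Aco m (e l) p)ᵀ = -Matrix.of fun l m => Aco m (e l) p := by
    ext l m
    simp [hA m l]
  have := congrFun₂ (Matrix.transpose_mul_mul_self_of_transpose_eq_neg μ hskew) k j
  rw [Matrix.transpose_apply, Matrix.neg_apply] at this
  rw [this, d2_comm hu j k, neg_mul]

end

/-- both components of the generalized divergence of the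
generalized Maxwell operator `Σ_j A_j ∂_j u` contain no second-order
derivatives of `u`, i.e. the corresponding double contractions vanish. -/
theorem div_of_maxwell_operator_cancels
    (μ : Matrix (Fin 3) (Fin 3) ℝ)
    (u : (Fin 3 → ℝ) → Fin 6 → ℝ) (x : Fin 3 → ℝ)
    (hu : ContDiffAt ℝ 2 u x) :
    (∑ j : Fin 3, ∑ k : Fin 3, ∑ l : Fin 6, ∑ p : Fin 6,
        mtilde μ l (Fin.castAdd 3 k) * Amat μ j l p * d2 u x k j p = 0) ∧
    (∑ j : Fin 3, ∑ k : Fin 3, ∑ l : Fin 6, ∑ p : Fin 6,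
        mtilde μ l (Fin.natAdd 3 k) * Amat μ j l p * d2 u x k j p = 0) :=
  ⟨sum_mtilde_mul_Amat_mul_d2_eq_zero (sum_mtilde_castAdd_mul μ) Aco_castAdd_swap hu,
    sum_mtilde_mul_Amat_mul_d2_eq_zero (sum_mtilde_natAdd_mul μ) Aco_natAdd_swap hu⟩
end
end

section
/- Let η > 0 and r ≥ η. There exists a constant C = C(η, r) > 0 such that for every real symmetric 6×6 matrix A₀ with xᵀA₀x ≥ η|x|² for all x ∈ ℝ⁶ and with operator norm at most r, the 8×6 matrix μ̂ whose first six rows are the six rows of A₃^co and whose last two rows are the third and the sixth row of A₀ satisfies |v| ≤ C |μ̂ v| for all v ∈ ℝ⁶. In particular μ̂ is injective, so in the half-space Maxwell problem the full gradient component ∂₃u can be recovered from A₃^co∂₃u together with the two rows (A₀∂₃u)₃ and (A₀∂₃u)₆ arising from the divergence structure. -/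
open Matrix

noncomputable section

/-- The matrix `J₃`. -/
def J3 : Matrix (Fin 3) (Fin 3) ℝ := !![0,-1,0; 1,0,0; 0,0,0]

/-- The block matrix `A₃^co = [[0, −J₃],[J₃, 0]]`. -/
def A3co : Matrix (Fin 6) (Fin 6) ℝ :=
  Matrix.reindex finSumFinEquiv finSumFinEquiv
    (Matrix.fromBlocks 0 (-J3) J3 0)

/-- The Euclidean norm on `ℝⁿ`. -/
def euclNorm {n : ℕ} (v : Fin n → ℝ) : ℝ := Real.sqrt (∑ i, v i ^ 2)

/-- The `8 × 6` matrix `μ̂` whose first six rows are the rows of `A₃^co` and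
whose last two rows are the third and sixth row of `A₀`. -/
def muhat (A0 : Matrix (Fin 6) (Fin 6) ℝ) : Matrix (Fin 8) (Fin 6) ℝ :=
  Matrix.of fun i j =>
    if h : (i : ℕ) < 6 then A3co ⟨i, h⟩ j
    else if (i : ℕ) = 6 then A0 2 j else A0 5 j

/-!
`A₃^co` kills `e₃, e₆` (indices `2, 5` of `Fin 6`) and permutes the other coordinates up to
sign, so `μ̂ v` controls both the part `w` of `v` off these two coordinates and the rows `3, 6`
of `A₀ v`. For the remaining part `u = v - w`, coercivity gives
`η |u|² ≤ ⟨u, A₀ u⟩ = ⟨u, A₀ v⟩ - ⟨u, A₀ w⟩ ≤ |u| (|(A₀ v)₃,₆| + r |w|)`,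
hence `|v| ≤ |u| + |w| ≤ ((1 + r) / η + 1) |μ̂ v|`.
-/

section EuclNorm

variable {n : ℕ}

lemma euclNorm_eq_norm (v : Fin n → ℝ) : euclNorm v = ‖WithLp.toLp 2 v‖ := by
  simp [euclNorm, EuclideanSpace.norm_eq]

lemma euclNorm_nonneg (v : Fin n → ℝ) : 0 ≤ euclNorm v := Real.sqrt_nonneg _

lemma euclNorm_sq (v : Fin n → ℝ) : euclNorm v ^ 2 = ∑ i, v i ^ 2 :=
  Real.sq_sqrt (Finset.sum_nonneg fun i _ => sq_nonneg (v i))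

lemma euclNorm_eq_zero {v : Fin n → ℝ} : euclNorm v = 0 ↔ v = 0 := by
  rw [euclNorm_eq_norm, norm_eq_zero, WithLp.toLp_eq_zero]

lemma euclNorm_add_le (v w : Fin n → ℝ) : euclNorm (v + w) ≤ euclNorm v + euclNorm w := by
  simpa only [euclNorm_eq_norm, WithLp.toLp_add] using norm_add_le _ _

lemma euclNorm_neg (v : Fin n → ℝ) : euclNorm (-v) = euclNorm v := by
  simp [euclNorm]

lemma dotProduct_le_euclNorm_mul (v w : Fin n → ℝ) : v ⬝ᵥ w ≤ euclNorm v * euclNorm w :=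
  Real.sum_mul_le_sqrt_mul_sqrt _ v w

lemma indicator_dotProduct (S : Set (Fin n)) (v w : Fin n → ℝ) :
    S.indicator v ⬝ᵥ w = S.indicator v ⬝ᵥ S.indicator w := by
  refine Finset.sum_congr rfl fun i _ => ?_
  by_cases hi : i ∈ S <;> simp [hi]

lemma coercive_mul_euclNorm_indicator_le {η r : ℝ} (hr : 0 ≤ r)
    {A : Matrix (Fin n) (Fin n) ℝ}
    (hpos : ∀ x : Fin n → ℝ, η * ∑ i, x i ^ 2 ≤ x ⬝ᵥ A *ᵥ x)
    (hop : ∀ x : Fin n → ℝ, euclNorm (A *ᵥ x) ≤ r * euclNorm x)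
    (S : Set (Fin n)) (v : Fin n → ℝ) :
    η * euclNorm (S.indicator v) ≤
      euclNorm (S.indicator (A *ᵥ v)) + r * euclNorm (Sᶜ.indicator v) := by
  set u := S.indicator v
  set w := Sᶜ.indicator v
  have hv : v = u + w := (S.indicator_self_add_compl v).symm
  have hAv : u ⬝ᵥ A *ᵥ v ≤ euclNorm u * euclNorm (S.indicator (A *ᵥ v)) := by
    rw [indicator_dotProduct]; exact dotProduct_le_euclNorm_mul _ _
  have hAw : -(u ⬝ᵥ A *ᵥ w) ≤ euclNorm u * (r * euclNorm w) := by
    calc -(u ⬝ᵥ A *ᵥ w) = u ⬝ᵥ -(A *ᵥ w) := (dotProduct_neg _ _).symm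
      _ ≤ euclNorm u * euclNorm (A *ᵥ w) := by
        simpa only [euclNorm_neg] using dotProduct_le_euclNorm_mul u (-(A *ᵥ w))
      _ ≤ euclNorm u * (r * euclNorm w) := mul_le_mul_of_nonneg_left (hop w) (euclNorm_nonneg u)
  have hsq : η * euclNorm u ^ 2 ≤
      euclNorm u * (euclNorm (S.indicator (A *ᵥ v)) + r * euclNorm w) := by
    calc η * euclNorm u ^ 2 ≤ u ⬝ᵥ A *ᵥ u := euclNorm_sq u ▸ hpos u
      _ = u ⬝ᵥ A *ᵥ v - u ⬝ᵥ A *ᵥ w := by rw [hv, mulVec_add, dotProduct_add]; ring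
      _ ≤ _ := by linarith
  rcases (euclNorm_nonneg u).eq_or_lt with hu | hu
  · rw [← hu, mul_zero]
    exact add_nonneg (euclNorm_nonneg _) (mul_nonneg hr (euclNorm_nonneg _))
  · exact le_of_mul_le_mul_left (by linarith) hu

lemma mulVec_injective_of_le_mul_euclNorm {m : ℕ} {M : Matrix (Fin m) (Fin n) ℝ} {C : ℝ}
    (hM : ∀ v, euclNorm v ≤ C * euclNorm (M *ᵥ v)) : Function.Injective M.mulVec := by
  intro v w hvw
  have h : euclNorm (v - w) ≤ 0 := by
    simpa [mulVec_sub, hvw, sub_self, euclNorm] using hM (v - w)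
  exact sub_eq_zero.mp (euclNorm_eq_zero.mp (le_antisymm h (euclNorm_nonneg _)))

end EuclNorm

lemma A3co_eq : A3co = !![0,0,0,0,1,0; 0,0,0,-1,0,0; 0,0,0,0,0,0; 0,-1,0,0,0,0;
    1,0,0,0,0,0; 0,0,0,0,0,0] := by
  ext i j
  fin_cases i <;> fin_cases j <;>
    norm_num [A3co, J3, Matrix.reindex_apply, Matrix.submatrix_apply, Matrix.fromBlocks,
      finSumFinEquiv, Fin.addCases, Fin.castLT, Fin.subNat]

lemma muhat_mulVec (A0 : Matrix (Fin 6) (Fin 6) ℝ) (v : Fin 6 → ℝ) :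
    muhat A0 *ᵥ v = ![v 4, -v 3, 0, -v 1, v 0, 0, (A0 *ᵥ v) 2, (A0 *ᵥ v) 5] := by
  ext i
  fin_cases i <;> norm_num [muhat, mulVec, dotProduct, Fin.sum_univ_succ, A3co_eq] <;> rfl

lemma euclNorm_muhat_mulVec_sq (A0 : Matrix (Fin 6) (Fin 6) ℝ) (v : Fin 6 → ℝ) :
    euclNorm (muhat A0 *ᵥ v) ^ 2 =
      euclNorm (({2, 5} : Set (Fin 6))ᶜ.indicator v) ^ 2 +
        euclNorm (({2, 5} : Set (Fin 6)).indicator (A0 *ᵥ v)) ^ 2 := by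
  simp only [euclNorm_sq, muhat_mulVec, Fin.sum_univ_succ]
  simp [Set.indicator]
  ring

lemma euclNorm_indicator_compl_le_euclNorm_muhat_mulVec (A0 : Matrix (Fin 6) (Fin 6) ℝ)
    (v : Fin 6 → ℝ) :
    euclNorm (({2, 5} : Set (Fin 6))ᶜ.indicator v) ≤ euclNorm (muhat A0 *ᵥ v) := by
  refine (pow_le_pow_iff_left₀ (euclNorm_nonneg _) (euclNorm_nonneg _) two_ne_zero).mp ?_
  rw [euclNorm_muhat_mulVec_sq]
  exact le_add_of_nonneg_right (sq_nonneg _)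

lemma euclNorm_indicator_mulVec_le_euclNorm_muhat_mulVec (A0 : Matrix (Fin 6) (Fin 6) ℝ)
    (v : Fin 6 → ℝ) :
    euclNorm (({2, 5} : Set (Fin 6)).indicator (A0 *ᵥ v)) ≤ euclNorm (muhat A0 *ᵥ v) := by
  refine (pow_le_pow_iff_left₀ (euclNorm_nonneg _) (euclNorm_nonneg _) two_ne_zero).mp ?_
  rw [euclNorm_muhat_mulVec_sq]
  exact le_add_of_nonneg_left (sq_nonneg _)

/-- there is a constant `C = C(η,r) > 0` such that for every
symmetric `η`-positive definite `A₀` with Euclidean operator norm at most `r`,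
the matrix `μ̂` satisfies `|v| ≤ C|μ̂v|` for all `v ∈ ℝ⁶`; in particular `μ̂`
is injective. -/
theorem muhat_lower_bound (η r : ℝ) (hη : 0 < η) (hr : η ≤ r) :
    ∃ C : ℝ, 0 < C ∧
      ∀ A0 : Matrix (Fin 6) (Fin 6) ℝ, A0.IsSymm →
        (∀ x : Fin 6 → ℝ, η * ∑ i, x i ^ 2 ≤ x ⬝ᵥ A0.mulVec x) →
        (∀ x : Fin 6 → ℝ, euclNorm (A0.mulVec x) ≤ r * euclNorm x) →
        (∀ v : Fin 6 → ℝ, euclNorm v ≤ C * euclNorm ((muhat A0).mulVec v)) ∧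
        Function.Injective (muhat A0).mulVec := by
  have hr0 : 0 ≤ r := hη.le.trans hr
  refine ⟨(1 + r) / η + 1, by positivity, fun A0 _ hpos hop => ?_⟩
  have hbound : ∀ v, euclNorm v ≤ ((1 + r) / η + 1) * euclNorm (muhat A0 *ᵥ v) := by
    intro v
    set S : Set (Fin 6) := {2, 5}
    set m := euclNorm (muhat A0 *ᵥ v)
    have hw : euclNorm (Sᶜ.indicator v) ≤ m :=
      euclNorm_indicator_compl_le_euclNorm_muhat_mulVec A0 v
    have hu : η * euclNorm (S.indicator v) ≤ (1 + r) * m := by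
      have := coercive_mul_euclNorm_indicator_le hr0 hpos hop S v
      nlinarith [euclNorm_indicator_mulVec_le_euclNorm_muhat_mulVec A0 v]
    calc euclNorm v ≤ euclNorm (S.indicator v) + euclNorm (Sᶜ.indicator v) := by
          simpa only [S.indicator_self_add_compl v] using
            euclNorm_add_le (S.indicator v) (Sᶜ.indicator v)
      _ ≤ (1 + r) / η * m + m := by
          gcongr
          rw [div_mul_eq_mul_div, le_div_iff₀ hη]
          linarith
      _ = ((1 + r) / η + 1) * m := by ring
  exact ⟨hbound, mulVec_injective_of_le_mul_euclNorm hbound⟩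
end
end

section
/- Let η > 0, r ≥ η and p ∈ ℕ₀. There exists a constant C = C(p, η, r) > 0 such that for every real symmetric 6×6 matrix A₀ with xᵀA₀x ≥ η|x|² for all x ∈ ℝ⁶ and operator norm at most r, and for every v ∈ ℝ⁶, there exists w ∈ ℝ⁶ with A₃^co (−A₀⁻¹ A₃^co)^p w = A₃^co v and |w| ≤ C |v|. In particular, the range of A₃^co(−A₀⁻¹A₃^co)^p contains the range of A₃^co. -/
open Matrix

noncomputable section

/-- The Euclidean norm on `ℝⁿ`. -/
def euclidNorm {n : ℕ} (v : Fin n → ℝ) : ℝ := Real.sqrt (∑ i, v i ^ 2)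

/-!
`A = A₃^co` is symmetric with `A³ = A`, so `P = A²` is the orthogonal projection onto its range.
Since `‖A₀‖ ≤ r`, Cauchy–Schwarz for the form of `A₀` gives `|x|² ≤ r xᵀA₀⁻¹x`, so
`S = A A₀⁻¹ A + (1 - P)` is coercive with constant `1 / max r 1`, hence invertible with
`‖S⁻¹‖ ≤ max r 1`. From `P S = A A₀⁻¹ A` one gets `A A₀⁻¹ A S⁻¹ A = A`, which telescopes to
`A (-A₀⁻¹A)^p (-S⁻¹A)^p = A`; thus `w = (-S⁻¹A)^p v` works, with `|w| ≤ (max r 1)^p |v|`.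
-/

section EuclideanEstimates

variable {n : ℕ}

lemma euclidNorm_sq (v : Fin n → ℝ) : euclidNorm v ^ 2 = v ⬝ᵥ v := by
  rw [euclidNorm, Real.sq_sqrt (by positivity)]
  simp only [dotProduct, sq]

lemma euclidNorm_nonneg (v : Fin n → ℝ) : 0 ≤ euclidNorm v := Real.sqrt_nonneg _

lemma dotProduct_self_nonneg (v : Fin n → ℝ) : 0 ≤ v ⬝ᵥ v :=
  euclidNorm_sq v ▸ sq_nonneg _

lemma euclidNorm_neg (v : Fin n → ℝ) : euclidNorm (-v) = euclidNorm v := by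
  simp [euclidNorm]

lemma dotProduct_le_euclidNorm_mul (x y : Fin n → ℝ) :
    x ⬝ᵥ y ≤ euclidNorm x * euclidNorm y := by
  simpa [euclidNorm, dotProduct] using Real.sum_mul_le_sqrt_mul_sqrt Finset.univ x y

lemma euclidNorm_pow_mulVec_le {M : Matrix (Fin n) (Fin n) ℝ} {c : ℝ} (hc : 0 ≤ c)
    (hM : ∀ x, euclidNorm (M *ᵥ x) ≤ c * euclidNorm x) (p : ℕ) (x : Fin n → ℝ) :
    euclidNorm (M ^ p *ᵥ x) ≤ c ^ p * euclidNorm x := by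
  induction p generalizing x with
  | zero => simp
  | succ p ih =>
    rw [pow_succ', ← mulVec_mulVec]
    calc euclidNorm (M *ᵥ (M ^ p *ᵥ x)) ≤ c * euclidNorm (M ^ p *ᵥ x) := hM _
      _ ≤ c * (c ^ p * euclidNorm x) := by gcongr; exact ih x
      _ = c ^ (p + 1) * euclidNorm x := by ring

lemma isUnit_det_of_dotProduct_self_le {M : Matrix (Fin n) (Fin n) ℝ} {K : ℝ}
    (hM : ∀ x, x ⬝ᵥ x ≤ K * (x ⬝ᵥ M *ᵥ x)) : IsUnit M.det := by
  rw [isUnit_iff_ne_zero, Ne, ← exists_mulVec_eq_zero_iff]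
  rintro ⟨x, hx, hMx⟩
  have h := hM x
  rw [hMx, dotProduct_zero, mul_zero] at h
  exact hx (dotProduct_self_eq_zero.1 (h.antisymm (dotProduct_self_nonneg x)))

lemma euclidNorm_inv_mulVec_le {M : Matrix (Fin n) (Fin n) ℝ} {K : ℝ} (hK : 0 ≤ K)
    (hM : ∀ x, x ⬝ᵥ x ≤ K * (x ⬝ᵥ M *ᵥ x)) (y : Fin n → ℝ) :
    euclidNorm (M⁻¹ *ᵥ y) ≤ K * euclidNorm y := by
  set x := M⁻¹ *ᵥ y
  have hMx : M *ᵥ x = y := by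
    rw [mulVec_mulVec, mul_nonsing_inv M (isUnit_det_of_dotProduct_self_le hM), one_mulVec]
  have h : euclidNorm x * euclidNorm x ≤ euclidNorm x * (K * euclidNorm y) := by
    calc euclidNorm x * euclidNorm x = x ⬝ᵥ x := by rw [← sq, euclidNorm_sq]
      _ ≤ K * (x ⬝ᵥ y) := hMx ▸ hM x
      _ ≤ K * (euclidNorm x * euclidNorm y) := by
          gcongr; exact dotProduct_le_euclidNorm_mul x y
      _ = euclidNorm x * (K * euclidNorm y) := by ring
  rcases (euclidNorm_nonneg x).eq_or_lt with hx | hx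
  · rw [← hx]; exact mul_nonneg hK (euclidNorm_nonneg y)
  · exact le_of_mul_le_mul_left h hx

lemma sq_dotProduct_mulVec_le {M : Matrix (Fin n) (Fin n) ℝ} (hM : M.IsSymm)
    (hpos : ∀ x, 0 ≤ x ⬝ᵥ M *ᵥ x) (x y : Fin n → ℝ) :
    (x ⬝ᵥ M *ᵥ y) ^ 2 ≤ (x ⬝ᵥ M *ᵥ x) * (y ⬝ᵥ M *ᵥ y) := by
  have hswap : y ⬝ᵥ M *ᵥ x = x ⬝ᵥ M *ᵥ y := by
    rw [dotProduct_comm, dotProduct_mulVec, ← mulVec_transpose, hM]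
  have hquad : ∀ t : ℝ, 0 ≤ (y ⬝ᵥ M *ᵥ y) * (t * t) + 2 * (x ⬝ᵥ M *ᵥ y) * t + x ⬝ᵥ M *ᵥ x := by
    intro t
    have h := hpos (x + t • y)
    simp only [mulVec_add, mulVec_smul, dotProduct_add, add_dotProduct, dotProduct_smul,
      smul_dotProduct, smul_eq_mul, hswap] at h
    linarith
  have h := discrim_le_zero hquad
  rw [discrim] at h
  linarith

lemma dotProduct_mulVec_self_le {M : Matrix (Fin n) (Fin n) ℝ} {r : ℝ} (hM : M.IsSymm)
    (hpos : ∀ x, 0 ≤ x ⬝ᵥ M *ᵥ x) (hbound : ∀ x, euclidNorm (M *ᵥ x) ≤ r * euclidNorm x)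
    (y : Fin n → ℝ) : M *ᵥ y ⬝ᵥ M *ᵥ y ≤ r * (y ⬝ᵥ M *ᵥ y) := by
  set x := M *ᵥ y
  have hx : x ⬝ᵥ x = y ⬝ᵥ M *ᵥ x := by
    rw [dotProduct_mulVec, ← mulVec_transpose, hM, dotProduct_comm]
  have hMx : x ⬝ᵥ M *ᵥ x ≤ r * (x ⬝ᵥ x) := by
    calc x ⬝ᵥ M *ᵥ x ≤ euclidNorm x * euclidNorm (M *ᵥ x) := dotProduct_le_euclidNorm_mul _ _
      _ ≤ euclidNorm x * (r * euclidNorm x) := by gcongr; exacts [euclidNorm_nonneg x, hbound x]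
      _ = r * (x ⬝ᵥ x) := by rw [← euclidNorm_sq]; ring
  have h : (x ⬝ᵥ x) * (x ⬝ᵥ x) ≤ (r * (y ⬝ᵥ M *ᵥ y)) * (x ⬝ᵥ x) := by
    calc (x ⬝ᵥ x) * (x ⬝ᵥ x) = (y ⬝ᵥ M *ᵥ x) ^ 2 := by rw [hx, sq]
      _ ≤ (y ⬝ᵥ M *ᵥ y) * (x ⬝ᵥ M *ᵥ x) := sq_dotProduct_mulVec_le hM hpos y x
      _ ≤ (y ⬝ᵥ M *ᵥ y) * (r * (x ⬝ᵥ x)) := by gcongr; exact hpos y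
      _ = (r * (y ⬝ᵥ M *ᵥ y)) * (x ⬝ᵥ x) := by ring
  rcases (dotProduct_self_nonneg x).eq_or_lt with h0 | h0
  · simp [dotProduct_self_eq_zero.1 h0.symm]
  · exact le_of_mul_le_mul_right h h0

lemma dotProduct_inv_mulVec_eq {M : Matrix (Fin n) (Fin n) ℝ} (hM : IsUnit M.det)
    (x : Fin n → ℝ) : x ⬝ᵥ M⁻¹ *ᵥ x = M⁻¹ *ᵥ x ⬝ᵥ M *ᵥ (M⁻¹ *ᵥ x) := by
  rw [mulVec_mulVec, mul_nonsing_inv M hM, one_mulVec, dotProduct_comm]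

lemma dotProduct_self_le_mul_dotProduct_inv_mulVec {M : Matrix (Fin n) (Fin n) ℝ} {r : ℝ}
    (hM : M.IsSymm) (hdet : IsUnit M.det) (hpos : ∀ x, 0 ≤ x ⬝ᵥ M *ᵥ x)
    (hbound : ∀ x, euclidNorm (M *ᵥ x) ≤ r * euclidNorm x) (x : Fin n → ℝ) :
    x ⬝ᵥ x ≤ r * (x ⬝ᵥ M⁻¹ *ᵥ x) := by
  have h := dotProduct_mulVec_self_le hM hpos hbound (M⁻¹ *ᵥ x)
  rwa [mulVec_mulVec, mul_nonsing_inv M hdet, one_mulVec, dotProduct_comm (M⁻¹ *ᵥ x)] at h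

/-- With `P = A²` the orthogonal projection onto the range of `A`, the matrix `A B A + (1 - P)`
acts as `A B A` on that range and as the identity on its complement, so it inherits the
coercivity of `B`. -/
lemma dotProduct_self_le_max_mul_dotProduct {A B : Matrix (Fin n) (Fin n) ℝ} {K : ℝ}
    (hA : A.IsSymm) (hAc : ∀ x, euclidNorm (A *ᵥ x) ≤ euclidNorm x)
    (hBpos : ∀ x, 0 ≤ x ⬝ᵥ B *ᵥ x) (hB : ∀ x, x ⬝ᵥ x ≤ K * (x ⬝ᵥ B *ᵥ x)) (y : Fin n → ℝ) :
    y ⬝ᵥ y ≤ max K 1 * (y ⬝ᵥ (A * B * A + 1 - A * A) *ᵥ y) := by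
  set z := A *ᵥ y
  have hswap : ∀ u, y ⬝ᵥ A *ᵥ u = z ⬝ᵥ u := fun u => by
    rw [dotProduct_mulVec, ← mulVec_transpose, hA]
  have hform : y ⬝ᵥ (A * B * A + 1 - A * A) *ᵥ y = z ⬝ᵥ B *ᵥ z + y ⬝ᵥ y - z ⬝ᵥ z := by
    rw [sub_mulVec, add_mulVec, ← mulVec_mulVec, ← mulVec_mulVec, ← mulVec_mulVec, one_mulVec,
      dotProduct_sub, dotProduct_add, hswap, hswap]
  have hzy : z ⬝ᵥ z ≤ y ⬝ᵥ y := by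
    rw [← euclidNorm_sq, ← euclidNorm_sq]
    exact pow_le_pow_left₀ (euclidNorm_nonneg _) (hAc y) 2
  rw [hform]
  nlinarith [hB z, hBpos z, le_max_left K 1, le_max_right K 1]

end EuclideanEstimates

theorem mul_pow_mul_pow_eq_self {M : Type*} [Monoid M] {a b c : M}
    (h : a * b * a * c * a = a) (n : ℕ) : a * (b * a) ^ n * (c * a) ^ n = a := by
  induction n with
  | zero => simp
  | succ n ih =>
    calc a * (b * a) ^ (n + 1) * (c * a) ^ (n + 1)
        = (a * b) ^ n * (a * b * a * c * a) * (c * a) ^ n := by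
          rw [pow_succ, pow_succ', ← mul_assoc a, ← mul_pow_mul]; simp only [mul_assoc]
      _ = a * (b * a) ^ n * (c * a) ^ n := by rw [h, mul_pow_mul]
      _ = a := ih

theorem mul_mul_mul_mul_eq_self {R : Type*} [Ring R] {a b t : R} (ha : a * a * a = a)
    (ht : (a * b * a + 1 - a * a) * t = 1) : a * b * a * t * a = a := by
  have hcompress : a * a * (a * b * a + 1 - a * a) = a * b * a := by
    rw [mul_sub, mul_add, mul_one, show a * a * (a * b * a) = a * a * a * b * a by noncomm_ring,
      show a * a * (a * a) = a * a * a * a by noncomm_ring, ha, add_sub_cancel_right]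
  rw [← hcompress, mul_assoc (a * a), ht, mul_one, ha]

theorem exists_mulVec_eq_mulVec_and_euclidNorm_le {n : ℕ} {A A0 : Matrix (Fin n) (Fin n) ℝ}
    {η r : ℝ} (hη : 0 < η) (hA : A.IsSymm) (hA3 : A * A * A = A)
    (hAc : ∀ x, euclidNorm (A *ᵥ x) ≤ euclidNorm x) (hA0 : A0.IsSymm)
    (hcoer : ∀ x, η * (x ⬝ᵥ x) ≤ x ⬝ᵥ A0 *ᵥ x)
    (hbound : ∀ x, euclidNorm (A0 *ᵥ x) ≤ r * euclidNorm x) (p : ℕ) (v : Fin n → ℝ) :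
    ∃ w, (A * (-(A0⁻¹) * A) ^ p) *ᵥ w = A *ᵥ v ∧ euclidNorm w ≤ max r 1 ^ p * euclidNorm v := by
  have hA0pos : ∀ x, 0 ≤ x ⬝ᵥ A0 *ᵥ x := fun x =>
    (mul_nonneg hη.le (dotProduct_self_nonneg x)).trans (hcoer x)
  have hA0det : IsUnit A0.det := isUnit_det_of_dotProduct_self_le (K := η⁻¹) fun x => by
    rw [le_inv_mul_iff₀ hη]; exact hcoer x
  have hBpos : ∀ x, 0 ≤ x ⬝ᵥ A0⁻¹ *ᵥ x := fun x => by
    rw [dotProduct_inv_mulVec_eq hA0det]; exact hA0pos _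
  set S := A * A0⁻¹ * A + 1 - A * A
  have hS : ∀ y, y ⬝ᵥ y ≤ max r 1 * (y ⬝ᵥ S *ᵥ y) := dotProduct_self_le_max_mul_dotProduct hA hAc
    hBpos (dotProduct_self_le_mul_dotProduct_inv_mulVec hA0 hA0det hA0pos hbound)
  have hAS : A * A0⁻¹ * A * S⁻¹ * A = A :=
    mul_mul_mul_mul_eq_self hA3 (mul_nonsing_inv S (isUnit_det_of_dotProduct_self_le hS))
  refine ⟨(-S⁻¹ * A) ^ p *ᵥ v, ?_, ?_⟩
  · rw [mulVec_mulVec, mul_pow_mul_pow_eq_self (by simpa only [mul_neg, neg_mul, neg_neg])]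
  · refine euclidNorm_pow_mulVec_le (by positivity) (fun x => ?_) p v
    rw [← mulVec_mulVec, neg_mulVec, euclidNorm_neg]
    calc euclidNorm (S⁻¹ *ᵥ (A *ᵥ x)) ≤ max r 1 * euclidNorm (A *ᵥ x) :=
          euclidNorm_inv_mulVec_le (by positivity) hS _
      _ ≤ max r 1 * euclidNorm x := by gcongr; exact hAc x

lemma A3co_mulVec (x : Fin 6 → ℝ) : A3co *ᵥ x = ![x 4, -x 3, 0, -x 1, x 0, 0] := by
  ext i
  fin_cases i <;>
    simp [A3co, J3, mulVec, dotProduct, Fin.sum_univ_succ, fromBlocks, finSumFinEquiv, Fin.addCases]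

lemma A3co_isSymm : A3co.IsSymm := by
  ext i j
  fin_cases i <;> fin_cases j <;> simp [A3co, J3, fromBlocks, finSumFinEquiv, Fin.addCases]

lemma A3co_mul_mul : A3co * A3co * A3co = A3co := by
  refine ext_iff_mulVec.2 fun x => ?_
  simp only [← mulVec_mulVec, A3co_mulVec]
  ext i
  fin_cases i <;> simp

lemma euclidNorm_A3co_mulVec_le (x : Fin 6 → ℝ) : euclidNorm (A3co *ᵥ x) ≤ euclidNorm x := by
  have hsum : ∑ i, (A3co *ᵥ x) i ^ 2 = x 4 ^ 2 + x 3 ^ 2 + x 1 ^ 2 + x 0 ^ 2 := by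
    simp [A3co_mulVec, Fin.sum_univ_six]
  refine Real.sqrt_le_sqrt ?_
  rw [hsum, Fin.sum_univ_six]
  nlinarith [sq_nonneg (x 2), sq_nonneg (x 5)]

theorem inverse_on_range_of_A3co_general (η r : ℝ) (p : ℕ) (hη : 0 < η) :
    ∃ C : ℝ, 0 < C ∧
      ∀ A0 : Matrix (Fin 6) (Fin 6) ℝ, A0.IsSymm →
        (∀ x : Fin 6 → ℝ, η * ∑ i, x i ^ 2 ≤ x ⬝ᵥ A0.mulVec x) →
        (∀ x : Fin 6 → ℝ, euclidNorm (A0.mulVec x) ≤ r * euclidNorm x) →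
        ∀ v : Fin 6 → ℝ, ∃ w : Fin 6 → ℝ,
          (A3co * (-(A0⁻¹) * A3co) ^ p).mulVec w = A3co.mulVec v ∧
          euclidNorm w ≤ C * euclidNorm v := by
  refine ⟨max r 1 ^ p, by positivity, fun A0 hA0 hcoer hbound v => ?_⟩
  refine exists_mulVec_eq_mulVec_and_euclidNorm_le hη A3co_isSymm A3co_mul_mul
    euclidNorm_A3co_mulVec_le hA0 (fun x => ?_) hbound p v
  simpa only [dotProduct, sq] using hcoer x

/-- there is a constant `C = C(p,η,r) > 0` such that for every
symmetric `η`-positive definite `A₀` with Euclidean operator norm at most `r`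
and every `v ∈ ℝ⁶` there is `w ∈ ℝ⁶` with
`A₃^co(−A₀⁻¹A₃^co)^p w = A₃^co v` and `|w| ≤ C|v|`; in particular the range of
`A₃^co(−A₀⁻¹A₃^co)^p` contains the range of `A₃^co`. -/
theorem inverse_on_range_of_A3co (η r : ℝ) (p : ℕ) (hη : 0 < η) (hr : η ≤ r) :
    ∃ C : ℝ, 0 < C ∧
      ∀ A0 : Matrix (Fin 6) (Fin 6) ℝ, A0.IsSymm →
        (∀ x : Fin 6 → ℝ, η * ∑ i, x i ^ 2 ≤ x ⬝ᵥ A0.mulVec x) →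
        (∀ x : Fin 6 → ℝ, euclidNorm (A0.mulVec x) ≤ r * euclidNorm x) →
        ∀ v : Fin 6 → ℝ, ∃ w : Fin 6 → ℝ,
          (A3co * (-(A0⁻¹) * A3co) ^ p).mulVec w = A3co.mulVec v ∧
          euclidNorm w ≤ C * euclidNorm v :=
  inverse_on_range_of_A3co_general η r p hη
end
end

section
/- Let μ₁, μ₂, μ₃ ∈ ℝ with μ₃ > 0. Define the 3×3 matrix Ĝ = (1/√μ₃) · [[1, 0, μ₁],[0, 1, μ₂],[0, 0, μ₃]] and the 6×6 block-diagonal matrix G = diag(Ĝ, Ĝ). Then Gᵀ (μ₁A₁^co + μ₂A₂^co + μ₃A₃^co) G = A₃^co. (This is the transform used in the localization procedure to turn the boundary matrix of the localized Maxwell system into the constant matrix A₃^co.) -/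
open Matrix

noncomputable section

/-- The matrix `Ĝ = (1/√μ₃)·[[1,0,μ₁],[0,1,μ₂],[0,0,μ₃]]`. -/
def Ghat (μ1 μ2 μ3 : ℝ) : Matrix (Fin 3) (Fin 3) ℝ :=
  (Real.sqrt μ3)⁻¹ • !![1, 0, μ1; 0, 1, μ2; 0, 0, μ3]

/-- The block diagonal matrix `G = diag(Ĝ, Ĝ)`. -/
def Gmat (μ1 μ2 μ3 : ℝ) : Matrix (Fin 6) (Fin 6) ℝ :=
  Matrix.reindex finSumFinEquiv finSumFinEquiv
    (Matrix.fromBlocks (Ghat μ1 μ2 μ3) 0 0 (Ghat μ1 μ2 μ3))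

end

/-!
With `M = [[1,0,μ₁],[0,1,μ₂],[0,0,μ₃]]`, the matrix `B = μ₁J₁ + μ₂J₂ + μ₃J₃` is the cross-product
matrix `[μ]ₓ` of `μ = M e₃`, so the identity `Mᵀ [M c]ₓ M = det M • [c]ₓ` gives
`Mᵀ B M = μ₃ • J₃`; the factor `1/√μ₃` in `Ĝ` cancels `det M = μ₃`. Since `G = diag(Ĝ, Ĝ)` and
`Σ μⱼ Aⱼ^co = [[0, -B], [B, 0]]`, conjugating by `G` acts blockwise as `B ↦ Ĝᵀ B Ĝ`.
-/

open Matrix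

lemma fromBlocks_diagonal_conj_skew {n α : Type*} [Fintype n] [Ring α] (G B : Matrix n n α) :
    (fromBlocks G 0 0 G)ᵀ * fromBlocks 0 (-B) B 0 * fromBlocks G 0 0 G
      = fromBlocks 0 (-(Gᵀ * B * G)) (Gᵀ * B * G) 0 := by
  simp [fromBlocks_transpose, fromBlocks_multiply, Matrix.mul_assoc]

lemma reindex_transpose_mul_mul {m n α : Type*} [Fintype m] [Fintype n] [Semiring α]
    (e : m ≃ n) (M N P : Matrix m m α) :
    (reindex e e M)ᵀ * reindex e e N * reindex e e P = reindex e e (Mᵀ * N * P) := by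
  simp [submatrix_mul_equiv]

lemma linearCombination_Aco (μ1 μ2 μ3 : ℝ) :
    μ1 • Aco 0 + μ2 • Aco 1 + μ3 • Aco 2 =
      reindex finSumFinEquiv finSumFinEquiv
        (fromBlocks 0 (-(μ1 • Jmat 0 + μ2 • Jmat 1 + μ3 • Jmat 2))
          (μ1 • Jmat 0 + μ2 • Jmat 1 + μ3 • Jmat 2) 0) := by
  simp only [Aco, ← coe_reindexLinearEquiv ℝ ℝ, ← map_smul, ← map_add, fromBlocks_smul,
    fromBlocks_add, smul_zero, add_zero, smul_neg, neg_add]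

lemma upperTriangular_conj_linearCombination_Jmat (μ1 μ2 μ3 : ℝ) :
    (!![1, 0, μ1; 0, 1, μ2; 0, 0, μ3])ᵀ * (μ1 • Jmat 0 + μ2 • Jmat 1 + μ3 • Jmat 2)
      * !![1, 0, μ1; 0, 1, μ2; 0, 0, μ3] = μ3 • Jmat 2 := by
  ext i j
  fin_cases i <;> fin_cases j <;> simp [Jmat, mul_apply, Fin.sum_univ_three] <;> ring

lemma Ghat_conj_linearCombination_Jmat (μ1 μ2 μ3 : ℝ) (hμ3 : 0 < μ3) :
    (Ghat μ1 μ2 μ3)ᵀ * (μ1 • Jmat 0 + μ2 • Jmat 1 + μ3 • Jmat 2) * Ghat μ1 μ2 μ3 = Jmat 2 := by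
  have hscale : (√μ3)⁻¹ * (√μ3)⁻¹ * μ3 = 1 := by
    rw [← mul_inv, Real.mul_self_sqrt hμ3.le, inv_mul_cancel₀ hμ3.ne']
  rw [Ghat, transpose_smul, Matrix.smul_mul, Matrix.smul_mul, Matrix.mul_smul,
    upperTriangular_conj_linearCombination_Jmat, smul_smul, smul_smul, hscale, one_smul]

/-- the localization transform `G` turns the boundary matrix
`μ₁A₁^co + μ₂A₂^co + μ₃A₃^co` into the constant matrix `A₃^co`. -/
theorem localization_transform (μ1 μ2 μ3 : ℝ) (hμ3 : 0 < μ3) :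
    (Gmat μ1 μ2 μ3)ᵀ * (μ1 • Aco 0 + μ2 • Aco 1 + μ3 • Aco 2) * Gmat μ1 μ2 μ3
      = Aco 2 := by
  rw [linearCombination_Aco, Gmat, reindex_transpose_mul_mul, fromBlocks_diagonal_conj_skew,
    Ghat_conj_linearCombination_Jmat μ1 μ2 μ3 hμ3, Aco]
end

section
/- Let I ⊆ ℝ be an open interval containing t₀. Let A₀, D : I × ℝ³ → ℝ^{6×6} and f : I × ℝ³ → ℝ⁶ be smooth with A₀(t,x) invertible for every (t,x), let A₁, A₂, A₃ : ℝ³ → ℝ^{6×6} be smooth (time-independent), and let u : I × ℝ³ → ℝ⁶ be a smooth pointwise solution of A₀∂ₜu + Σ_{j=1}^{3} A_j ∂_j u + D u = f on I × ℝ³. For data (A₀, A₁, A₂, A₃, D', f', u₀') with D' : I × ℝ³ → ℝ^{6×6} and f' : I × ℝ³ → ℝ⁶ smooth and u₀' : ℝ³ → ℝ⁶ smooth, define S_p(t₀, A₀, A₁, A₂, A₃, D', f', u₀') recursively by S₀ = u₀' and, for p ≥ 1, S_p = A₀(t₀,·)⁻¹ ( ∂ₜ^{p−1}f'(t₀,·)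 − Σ_{j=1}^{3} A_j ∂_j S_{p−1} − Σ_{l=1}^{p−1} C(p−1,l) ∂ₜ^{l}A₀(t₀,·) S_{p−l} − Σ_{l=0}^{p−1} C(p−1,l) ∂ₜ^{l}D'(t₀,·) S_{p−1−l} ). Set u₁ = S₁(t₀, A₀, A₁, A₂, A₃, D, f, u(t₀,·)) and f₁ = ∂ₜf − (∂ₜD)u. Then for every p ∈ ℕ₀ one has S_p(t₀, A₀, A₁, A₂, A₃, ∂ₜA₀ + D, f₁, u₁) = S_{p+1}(t₀, A₀, A₁, A₂, A₃, D, f, u(t₀,·)). -/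
open Matrix

open ContDiff

noncomputable section

/-- The entrywise time derivative of a matrix-valued function on `ℝ × ℝ³`. -/
def tDm (F : ℝ × (Fin 3 → ℝ) → Matrix (Fin 6) (Fin 6) ℝ) :
    ℝ × (Fin 3 → ℝ) → Matrix (Fin 6) (Fin 6) ℝ :=
  fun z => Matrix.of fun i j => fderiv ℝ (fun w => F w i j) z (1, 0)

/-- The entrywise time derivative of a vector-valued function on `ℝ × ℝ³`. -/
def tDv (F : ℝ × (Fin 3 → ℝ) → Fin 6 → ℝ) : ℝ × (Fin 3 → ℝ) → Fin 6 → ℝ :=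
  fun z i => fderiv ℝ (fun w => F w i) z (1, 0)

/-- The classical partial derivative `∂_j` (in space) of a time-dependent
vector-valued function. -/
def px (j : Fin 3) (F : ℝ × (Fin 3 → ℝ) → Fin 6 → ℝ)
    (z : ℝ × (Fin 3 → ℝ)) : Fin 6 → ℝ :=
  fun i => fderiv ℝ (fun w => F w i) z (0, Pi.single j 1)

/-- The classical partial derivative `∂_j` of a vector field on `ℝ³`. -/
def sDv (j : Fin 3) (F : (Fin 3 → ℝ) → Fin 6 → ℝ) (x : Fin 3 → ℝ) : Fin 6 → ℝ :=
  fun i => fderiv ℝ (fun y => F y i) x (Pi.single j 1)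

abbrev EE := ℝ × (Fin 3 → ℝ)

namespace SShiftAux

def dd (v : EE) (F : EE → ℝ) (z : EE) : ℝ := fderiv ℝ F z v

def et : EE := (1, 0)
def exd (j : Fin 3) : EE := (0, Pi.single j 1)

lemma tDv_apply (F : EE → Fin 6 → ℝ) (z : EE) (i : Fin 6) :
    tDv F z i = dd et (fun w => F w i) z := rfl

lemma tDm_apply (M : EE → Matrix (Fin 6) (Fin 6) ℝ) (z : EE) (i j : Fin 6) :
    tDm M z i j = dd et (fun w => M w i j) z := rfl

lemma px_apply (j : Fin 3) (F : EE → Fin 6 → ℝ) (z : EE) (i : Fin 6) :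
    px j F z i = dd (exd j) (fun w => F w i) z := rfl

/-- Smoothness predicate for vector-valued functions. -/
def SmV (U : Set EE) (F : EE → Fin 6 → ℝ) : Prop :=
  ∀ i, ContDiffOn ℝ ∞ (fun z => F z i) U

/-- Smoothness predicate for matrix-valued functions. -/
def SmM (U : Set EE) (M : EE → Matrix (Fin 6) (Fin 6) ℝ) : Prop :=
  ∀ i j, ContDiffOn ℝ ∞ (fun z => M z i j) U

lemma contDiffOn_dd {F : EE → ℝ} {U : Set EE} (hU : IsOpen U)
    (hF : ContDiffOn ℝ ∞ F U) (v : EE) :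
    ContDiffOn ℝ ∞ (dd v F) U := by
  have h := hF.fderiv_of_isOpen hU (le_of_eq (show ∞ + 1 = (∞ : WithTop ℕ∞) from rfl))
  exact h.clm_apply contDiffOn_const

lemma dd_congr {F G : EE → ℝ} {U : Set EE} (hU : IsOpen U) {z : EE} (hz : z ∈ U)
    (h : ∀ w ∈ U, F w = G w) (v : EE) : dd v F z = dd v G z := by
  have : F =ᶠ[nhds z] G := Filter.eventuallyEq_of_mem (hU.mem_nhds hz) h
  simp [dd, this.fderiv_eq]

lemma dd_add {F G : EE → ℝ} {z : EE} (hF : DifferentiableAt ℝ F z)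
    (hG : DifferentiableAt ℝ G z) (v : EE) :
    dd v (fun w => F w + G w) z = dd v F z + dd v G z := by
  simp [dd, fderiv_fun_add hF hG]

lemma dd_mul {F G : EE → ℝ} {z : EE} (hF : DifferentiableAt ℝ F z)
    (hG : DifferentiableAt ℝ G z) (v : EE) :
    dd v (fun w => F w * G w) z = dd v F z * G z + F z * dd v G z := by
  simp [dd, fderiv_fun_mul hF hG, smul_eq_mul]
  ring

lemma dd_sum {ι : Type*} (s : Finset ι) {F : ι → EE → ℝ} {z : EE}
    (hF : ∀ a ∈ s, DifferentiableAt ℝ (F a) z) (v : EE) :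
    dd v (fun w => ∑ a ∈ s, F a w) z = ∑ a ∈ s, dd v (F a) z := by
  simp [dd, fderiv_fun_sum hF]

/-- Clairaut / symmetry of second derivatives. -/
lemma dd_comm {F : EE → ℝ} {U : Set EE} (hU : IsOpen U) {z : EE} (hz : z ∈ U)
    (hF : ContDiffOn ℝ ∞ F U) (v w : EE) :
    dd v (dd w F) z = dd w (dd v F) z := by
  have hdiff : ∀ᶠ y in nhds z, HasFDerivAt F (fderiv ℝ F y) y := by
    filter_upwards [hU.mem_nhds hz] with y hy
    exact (((hF.differentiableOn (by norm_num)).differentiableAt (hU.mem_nhds hy))).hasFDerivAt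
  have h2 : DifferentiableAt ℝ (fderiv ℝ F) z := by
    have := (hF.fderiv_of_isOpen hU (le_of_eq (show ∞ + 1 = (∞ : WithTop ℕ∞) from rfl)))
    exact (this.differentiableOn (by norm_num)).differentiableAt (hU.mem_nhds hz)
  have hsymm := second_derivative_symmetric_of_eventually hdiff h2.hasFDerivAt w v
  -- dd v (dd w F) z = fderiv (fun y => fderiv F y w) z v
  have key : ∀ a : EE, fderiv ℝ (fun y => fderiv ℝ F y a) z
      = (ContinuousLinearMap.apply ℝ ℝ a).comp (fderiv ℝ (fderiv ℝ F) z) := by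
    intro a
    exact (((ContinuousLinearMap.apply ℝ ℝ a).hasFDerivAt).comp z h2.hasFDerivAt).fderiv
  show (fderiv ℝ (fun y => fderiv ℝ F y w) z) v = (fderiv ℝ (fun y => fderiv ℝ F y v) z) w
  rw [key w, key v]
  simpa using hsymm.symm


variable {U : Set EE}

lemma diffAt_of_cd (hU : IsOpen U) {z : EE} (hz : z ∈ U) {F : EE → ℝ}
    (hF : ContDiffOn ℝ ∞ F U) : DifferentiableAt ℝ F z :=
  (hF.differentiableOn (by norm_num)).differentiableAt (hU.mem_nhds hz)

lemma SmV.tDv' (hU : IsOpen U) {F : EE → Fin 6 → ℝ} (hF : SmV U F) : SmV U (tDv F) :=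
  fun i => contDiffOn_dd hU (hF i) et

lemma SmV.px' (hU : IsOpen U) (j : Fin 3) {F : EE → Fin 6 → ℝ} (hF : SmV U F) :
    SmV U (px j F) :=
  fun i => contDiffOn_dd hU (hF i) (exd j)

lemma SmM.tDm' (hU : IsOpen U) {M : EE → Matrix (Fin 6) (Fin 6) ℝ} (hM : SmM U M) :
    SmM U (tDm M) :=
  fun i j => contDiffOn_dd hU (hM i j) et

lemma SmV.tDv_iter (hU : IsOpen U) {F : EE → Fin 6 → ℝ} (hF : SmV U F) (p : ℕ) :
    SmV U (tDv^[p] F) := by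
  induction p with
  | zero => exact hF
  | succ p ih => rw [Function.iterate_succ_apply']; exact ih.tDv' hU

lemma SmM.tDm_iter (hU : IsOpen U) {M : EE → Matrix (Fin 6) (Fin 6) ℝ} (hM : SmM U M) (p : ℕ) :
    SmM U (tDm^[p] M) := by
  induction p with
  | zero => exact hM
  | succ p ih => rw [Function.iterate_succ_apply']; exact ih.tDm' hU

lemma SmV.addV {F G : EE → Fin 6 → ℝ} (hF : SmV U F) (hG : SmV U G) :
    SmV U (fun z => F z + G z) := fun i => by
  have : (fun z => (F z + G z) i) = fun z => F z i + G z i := rfl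
  rw [this]; exact (hF i).add (hG i)

lemma SmV.subV {F G : EE → Fin 6 → ℝ} (hF : SmV U F) (hG : SmV U G) :
    SmV U (fun z => F z - G z) := fun i => by
  have : (fun z => (F z - G z) i) = fun z => F z i - G z i := rfl
  rw [this]; exact (hF i).sub (hG i)

lemma SmV.smulV {F : EE → Fin 6 → ℝ} (c : ℝ) (hF : SmV U F) :
    SmV U (fun z => c • F z) := fun i => by
  have : (fun z => (c • F z) i) = fun z => c * F z i := rfl
  rw [this]; exact (hF i).const_smul c

lemma SmV.sumV {ι : Type*} {s : Finset ι} {F : ι → EE → Fin 6 → ℝ}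
    (hF : ∀ a ∈ s, SmV U (F a)) : SmV U (fun z => ∑ a ∈ s, F a z) := fun i => by
  have : (fun z => (∑ a ∈ s, F a z) i) = fun z => ∑ a ∈ s, F a z i := by
    funext z; simp
  rw [this]; exact ContDiffOn.sum (fun a ha => hF a ha i)

lemma SmM.mulVecV {M : EE → Matrix (Fin 6) (Fin 6) ℝ} {v : EE → Fin 6 → ℝ}
    (hM : SmM U M) (hv : SmV U v) : SmV U (fun z => (M z).mulVec (v z)) := fun i => by
  have : (fun z => (M z).mulVec (v z) i) = fun z => ∑ k, M z i k * v z k := by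
    funext z; simp [Matrix.mulVec, dotProduct]
  rw [this]; exact ContDiffOn.sum (fun k _ => (hM i k).mul (hv k))

lemma SmM.addM {M N : EE → Matrix (Fin 6) (Fin 6) ℝ} (hM : SmM U M) (hN : SmM U N) :
    SmM U (fun z => M z + N z) := fun i j => by
  have : (fun z => (M z + N z) i j) = fun z => M z i j + N z i j := rfl
  rw [this]; exact (hM i j).add (hN i j)

/- congruence lemmas -/
lemma tDv_congr (hU : IsOpen U) {z : EE} (hz : z ∈ U) {F G : EE → Fin 6 → ℝ}
    (h : ∀ w ∈ U, F w = G w) : tDv F z = tDv G z := by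
  funext i
  exact dd_congr hU hz (fun w hw => congrFun (h w hw) i) et

lemma tDv_iter_congr (hU : IsOpen U) {F G : EE → Fin 6 → ℝ}
    (h : ∀ w ∈ U, F w = G w) (p : ℕ) : ∀ z ∈ U, tDv^[p] F z = tDv^[p] G z := by
  induction p with
  | zero => exact h
  | succ p ih =>
    intro z hz
    rw [Function.iterate_succ_apply', Function.iterate_succ_apply']
    exact tDv_congr hU hz ih

/- calculus rules for `tDv` -/
lemma tDv_addV (hU : IsOpen U) {z : EE} (hz : z ∈ U) {F G : EE → Fin 6 → ℝ}
    (hF : SmV U F) (hG : SmV U G) :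
    tDv (fun w => F w + G w) z = tDv F z + tDv G z := by
  funext i
  have h1 : (fun w => (F w + G w) i) = fun w => F w i + G w i := rfl
  show dd et (fun w => (F w + G w) i) z = tDv F z i + tDv G z i
  rw [h1, dd_add (diffAt_of_cd hU hz (hF i)) (diffAt_of_cd hU hz (hG i))]
  rfl

lemma tDv_subV (hU : IsOpen U) {z : EE} (hz : z ∈ U) {F G : EE → Fin 6 → ℝ}
    (hF : SmV U F) (hG : SmV U G) :
    tDv (fun w => F w - G w) z = tDv F z - tDv G z := by
  funext i
  have h1 : (fun w => (F w - G w) i) = fun w => F w i + (-1 : ℝ) * G w i := by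
    funext w; show F w i - G w i = _; ring
  show dd et (fun w => (F w - G w) i) z = tDv F z i - tDv G z i
  rw [h1, dd_add (diffAt_of_cd hU hz (hF i))
    (((diffAt_of_cd hU hz (hG i)).const_mul (-1 : ℝ)))]
  have h2 : dd et (fun w => (-1 : ℝ) * G w i) z = (-1 : ℝ) * dd et (fun w => G w i) z := by
    simp [dd, fderiv_const_mul (diffAt_of_cd hU hz (hG i))]
  rw [h2]; show _ = tDv F z i - tDv G z i; rw [tDv_apply, tDv_apply]; ring

lemma tDv_smulV (hU : IsOpen U) {z : EE} (hz : z ∈ U) (c : ℝ) {F : EE → Fin 6 → ℝ}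
    (hF : SmV U F) :
    tDv (fun w => c • F w) z = c • tDv F z := by
  funext i
  have h1 : (fun w => (c • F w) i) = fun w => c * F w i := rfl
  show dd et (fun w => (c • F w) i) z = (c • tDv F z) i
  rw [h1]
  have h2 : dd et (fun w => c * F w i) z = c * dd et (fun w => F w i) z := by
    simp [dd, fderiv_const_mul (diffAt_of_cd hU hz (hF i))]
  rw [h2]; rfl

lemma tDv_sumV (hU : IsOpen U) {z : EE} (hz : z ∈ U) {ι : Type*} (s : Finset ι)
    {F : ι → EE → Fin 6 → ℝ} (hF : ∀ a ∈ s, SmV U (F a)) :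
    tDv (fun w => ∑ a ∈ s, F a w) z = ∑ a ∈ s, tDv (F a) z := by
  funext i
  have h1 : (fun w => (∑ a ∈ s, F a w) i) = fun w => ∑ a ∈ s, F a w i := by
    funext w; simp
  show dd et (fun w => (∑ a ∈ s, F a w) i) z = (∑ a ∈ s, tDv (F a) z) i
  rw [h1, dd_sum s (fun a ha => diffAt_of_cd hU hz (hF a ha i))]
  simp [tDv_apply]

lemma tDv_mulVec (hU : IsOpen U) {z : EE} (hz : z ∈ U)
    {M : EE → Matrix (Fin 6) (Fin 6) ℝ} {v : EE → Fin 6 → ℝ}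
    (hM : SmM U M) (hv : SmV U v) :
    tDv (fun w => (M w).mulVec (v w)) z
      = (tDm M z).mulVec (v z) + (M z).mulVec (tDv v z) := by
  funext i
  have h1 : (fun w => (M w).mulVec (v w) i) = fun w => ∑ k, M w i k * v w k := by
    funext w; simp [Matrix.mulVec, dotProduct]
  show dd et (fun w => (M w).mulVec (v w) i) z = _
  rw [h1, dd_sum (F := fun k w => M w i k * v w k) Finset.univ (fun k _ =>
    ((diffAt_of_cd hU hz (hM i k)).mul (diffAt_of_cd hU hz (hv k))))]
  have h2 : ∀ k, dd et (fun w => M w i k * v w k) z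
      = dd et (fun w => M w i k) z * v z k + M z i k * dd et (fun w => v w k) z :=
    fun k => dd_mul (diffAt_of_cd hU hz (hM i k)) (diffAt_of_cd hU hz (hv k)) et
  simp only [h2]
  rw [Finset.sum_add_distrib]
  rfl


/-- time derivative of a time-independent matrix vanishes -/
lemma tDm_const (Aj : (Fin 3 → ℝ) → Matrix (Fin 6) (Fin 6) ℝ)
    (hA : ∀ a b : Fin 6, ContDiff ℝ ∞ fun x => Aj x a b) (z : EE) :
    tDm (fun w => Aj w.2) z = 0 := by
  funext a b
  have hcomp : HasFDerivAt (fun w : EE => Aj w.2 a b)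
      ((fderiv ℝ (fun x => Aj x a b) z.2).comp (ContinuousLinearMap.snd ℝ ℝ (Fin 3 → ℝ))) z :=
    (((hA a b).differentiable (by norm_num)) z.2).hasFDerivAt.comp z hasFDerivAt_snd
  show fderiv ℝ (fun w : EE => Aj w.2 a b) z (1, 0) = 0
  rw [hcomp.fderiv]
  simp

/-- Clairaut: `tDv` and `px` commute on smooth functions. -/
lemma tDv_px (hU : IsOpen U) {z : EE} (hz : z ∈ U) (j : Fin 3) {F : EE → Fin 6 → ℝ}
    (hF : SmV U F) : tDv (px j F) z = px j (tDv F) z := by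
  funext i
  show dd et (fun w => px j F w i) z = dd (exd j) (fun w => tDv F w i) z
  have h1 : (fun w => px j F w i) = dd (exd j) (fun w => F w i) := rfl
  have h2 : (fun w => tDv F w i) = dd et (fun w => F w i) := rfl
  rw [h1, h2]
  exact dd_comm hU hz (hF i) et (exd j)

lemma tDv_iter_px (hU : IsOpen U) (j : Fin 3) {F : EE → Fin 6 → ℝ}
    (hF : SmV U F) (p : ℕ) :
    ∀ z ∈ U, tDv^[p] (px j F) z = px j (tDv^[p] F) z := by
  induction p with
  | zero => intro z _; rfl
  | succ p ih =>
    intro z hz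
    rw [Function.iterate_succ_apply']
    rw [tDv_congr hU hz ih]
    rw [tDv_px hU hz j (hF.tDv_iter hU p)]
    rw [← Function.iterate_succ_apply' tDv p F]

/-- slicing: spatial derivative of the time slice -/
lemma sDv_slice (hU : IsOpen U) (j : Fin 3) {H : EE → Fin 6 → ℝ} (hH : SmV U H)
    (t₀ : ℝ) (x : Fin 3 → ℝ) (hz : ((t₀ : ℝ), x) ∈ U) :
    sDv j (fun y => H (t₀, y)) x = px j H (t₀, x) := by
  funext i
  have hinner : HasFDerivAt (fun y : Fin 3 → ℝ => ((t₀ : ℝ), y))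
      (((0 : (Fin 3 → ℝ) →L[ℝ] ℝ)).prod (ContinuousLinearMap.id ℝ (Fin 3 → ℝ))) x :=
    HasFDerivAt.prodMk (hasFDerivAt_const t₀ x) (hasFDerivAt_id x)
  have hcomp := ((diffAt_of_cd hU hz (hH i)).hasFDerivAt.comp x hinner)
  show fderiv ℝ (fun y => H (t₀, y) i) x (Pi.single j 1) = _
  rw [show (fun y => H (t₀, y) i) = ((fun w => H w i) ∘ (fun y => ((t₀ : ℝ), y))) from rfl,
    hcomp.fderiv]
  simp [px]

/-- the single-step product rule for a time-independent coefficient matrix -/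
lemma tDv_const_mulVec (hU : IsOpen U) {z : EE} (hz : z ∈ U)
    (Aj : (Fin 3 → ℝ) → Matrix (Fin 6) (Fin 6) ℝ)
    (hA : ∀ a b : Fin 6, ContDiff ℝ ∞ fun x => Aj x a b)
    {v : EE → Fin 6 → ℝ} (hv : SmV U v) :
    tDv (fun w => (Aj w.2).mulVec (v w)) z = (Aj z.2).mulVec (tDv v z) := by
  have hM : SmM U (fun w => Aj w.2) := fun a b =>
    ((hA a b).comp contDiff_snd).contDiffOn
  rw [tDv_mulVec hU hz hM hv, tDm_const Aj hA z]
  simp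

lemma smv_constA (Aj : (Fin 3 → ℝ) → Matrix (Fin 6) (Fin 6) ℝ)
    (hA : ∀ a b : Fin 6, ContDiff ℝ ∞ fun x => Aj x a b) :
    SmM U (fun w => Aj w.2) := fun a b => ((hA a b).comp contDiff_snd).contDiffOn

/-- iterated: time-independent coefficient pulls out of iterated time derivatives -/
lemma tDv_iter_const_mulVec (hU : IsOpen U)
    (Aj : (Fin 3 → ℝ) → Matrix (Fin 6) (Fin 6) ℝ)
    (hA : ∀ a b : Fin 6, ContDiff ℝ ∞ fun x => Aj x a b)
    {v : EE → Fin 6 → ℝ} (hv : SmV U v) (p : ℕ) :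
    ∀ z ∈ U, tDv^[p] (fun w => (Aj w.2).mulVec (v w)) z
      = (Aj z.2).mulVec (tDv^[p] v z) := by
  induction p with
  | zero => intro z _; rfl
  | succ p ih =>
    intro z hz
    rw [Function.iterate_succ_apply', tDv_congr hU hz ih,
      tDv_const_mulVec hU hz Aj hA (hv.tDv_iter hU p),
      ← Function.iterate_succ_apply' tDv p v]

/-- binomial recombination -/
lemma binom_step (p : ℕ) (b : ℕ → Fin 6 → ℝ) :
    (∑ l ∈ Finset.range (p + 1), (p.choose l : ℝ) • b (l + 1))
      + (∑ l ∈ Finset.range (p + 1), (p.choose l : ℝ) • b l)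
    = ∑ l ∈ Finset.range (p + 2), ((p + 1).choose l : ℝ) • b l := by
  rw [Finset.sum_range_succ' (fun l => (((p + 1).choose l : ℝ)) • b l) (p + 1)]
  have h1 : ∀ l ∈ Finset.range (p + 1), ((p + 1).choose (l + 1) : ℝ) • b (l + 1)
      = (p.choose l : ℝ) • b (l + 1) + (p.choose (l + 1) : ℝ) • b (l + 1) := by
    intro l _; rw [Nat.choose_succ_succ]; push_cast; rw [add_smul]
  rw [Finset.sum_congr rfl h1, Finset.sum_add_distrib]
  have h2 : (∑ l ∈ Finset.range (p + 1), (p.choose (l + 1) : ℝ) • b (l + 1))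
      + ((p + 1).choose 0 : ℝ) • b 0
      = ∑ l ∈ Finset.range (p + 1), (p.choose l : ℝ) • b l := by
    have h3 := (Finset.sum_range_succ' (fun l => (p.choose l : ℝ) • b l) (p + 1)).symm
    rw [Finset.sum_range_succ (fun l => (p.choose l : ℝ) • b l) (p + 1)] at h3
    simpa [Nat.choose_succ_self] using h3
  rw [add_assoc, h2]


lemma tDv_iter_addV (hU : IsOpen U) {F G : EE → Fin 6 → ℝ}
    (hF : SmV U F) (hG : SmV U G) (p : ℕ) :
    ∀ z ∈ U, tDv^[p] (fun w => F w + G w) z = tDv^[p] F z + tDv^[p] G z := by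
  induction p with
  | zero => intro z _; rfl
  | succ p ih =>
    intro z hz
    rw [Function.iterate_succ_apply',
      tDv_congr (G := fun w => tDv^[p] F w + tDv^[p] G w) hU hz ih,
      tDv_addV hU hz (hF.tDv_iter hU p) (hG.tDv_iter hU p),
      ← Function.iterate_succ_apply' tDv p F, ← Function.iterate_succ_apply' tDv p G]

lemma tDv_iter_sumV (hU : IsOpen U) {ι : Type*} (s : Finset ι)
    {F : ι → EE → Fin 6 → ℝ} (hF : ∀ a ∈ s, SmV U (F a)) (p : ℕ) :
    ∀ z ∈ U, tDv^[p] (fun w => ∑ a ∈ s, F a w) z = ∑ a ∈ s, tDv^[p] (F a) z := by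
  induction p with
  | zero => intro z _; rfl
  | succ p ih =>
    intro z hz
    rw [Function.iterate_succ_apply',
      tDv_congr (G := fun w => ∑ a ∈ s, tDv^[p] (F a) w) hU hz ih,
      tDv_sumV hU hz s (fun a ha => (hF a ha).tDv_iter hU p)]
    exact Finset.sum_congr rfl fun a _ => by
      rw [← Function.iterate_succ_apply' tDv p (F a)]

/-- the iterated Leibniz rule for `mulVec`. -/
lemma tDv_iter_mulVec (hU : IsOpen U) {M : EE → Matrix (Fin 6) (Fin 6) ℝ}
    {v : EE → Fin 6 → ℝ} (hM : SmM U M) (hv : SmV U v) (p : ℕ) :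
    ∀ z ∈ U, tDv^[p] (fun w => (M w).mulVec (v w)) z
      = ∑ l ∈ Finset.range (p + 1),
          (p.choose l : ℝ) • (tDm^[l] M z).mulVec (tDv^[p - l] v z) := by
  induction p with
  | zero => intro z _; simp
  | succ p ih =>
    intro z hz
    rw [Function.iterate_succ_apply',
      tDv_congr (G := fun w => ∑ l ∈ Finset.range (p + 1),
        (p.choose l : ℝ) • (tDm^[l] M w).mulVec (tDv^[p - l] v w)) hU hz ih,
      tDv_sumV hU hz (Finset.range (p + 1)) (fun l _ =>
        ((hM.tDm_iter hU l).mulVecV (hv.tDv_iter hU (p - l))).smulV _)]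
    have hl : ∀ l ∈ Finset.range (p + 1),
        tDv (fun w => (p.choose l : ℝ) • (tDm^[l] M w).mulVec (tDv^[p - l] v w)) z
        = (p.choose l : ℝ) • (tDm^[l + 1] M z).mulVec (tDv^[p - l] v z)
          + (p.choose l : ℝ) • (tDm^[l] M z).mulVec (tDv^[p + 1 - l] v z) := by
      intro l hlm
      rw [tDv_smulV hU hz _ ((hM.tDm_iter hU l).mulVecV (hv.tDv_iter hU (p - l))),
        tDv_mulVec hU hz (hM.tDm_iter hU l) (hv.tDv_iter hU (p - l)),
        ← Function.iterate_succ_apply' tDm l M,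
        ← Function.iterate_succ_apply' tDv (p - l) v,
        show (p - l).succ = p + 1 - l by
          have := Finset.mem_range.1 hlm; omega]
      simp [Nat.succ_eq_add_one, smul_add]
    rw [Finset.sum_congr rfl hl, Finset.sum_add_distrib,
      ← binom_step p (fun m => (tDm^[m] M z).mulVec (tDv^[p + 1 - m] v z))]
    congr 1
    exact Finset.sum_congr rfl fun l _ => by rw [Nat.succ_sub_succ]

lemma inv_mulVec_cancel {M : Matrix (Fin 6) (Fin 6) ℝ} (h : IsUnit M) (v : Fin 6 → ℝ) :
    M⁻¹.mulVec (M.mulVec v) = v := by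
  rw [Matrix.mulVec_mulVec,
    Matrix.nonsing_inv_mul M ((Matrix.isUnit_iff_isUnit_det M).1 h), Matrix.one_mulVec]


/-- the `p`-times time-differentiated PDE. -/
lemma pde_iter (hU : IsOpen U)
    (A0 B : EE → Matrix (Fin 6) (Fin 6) ℝ) (g w : EE → Fin 6 → ℝ)
    (A : Fin 3 → (Fin 3 → ℝ) → Matrix (Fin 6) (Fin 6) ℝ)
    (hA0 : SmM U A0) (hB : SmM U B) (hg : SmV U g) (hw : SmV U w)
    (hA : ∀ j : Fin 3, ∀ a b : Fin 6, ContDiff ℝ ∞ fun x => A j x a b)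
    (hpde : ∀ z ∈ U, (A0 z).mulVec (tDv w z)
      + (∑ j : Fin 3, (A j z.2).mulVec (px j w z)) + (B z).mulVec (w z) = g z)
    (p : ℕ) : ∀ z ∈ U,
      (∑ l ∈ Finset.range (p + 1),
          (p.choose l : ℝ) • (tDm^[l] A0 z).mulVec (tDv^[p + 1 - l] w z))
        + (∑ j : Fin 3, (A j z.2).mulVec (px j (tDv^[p] w) z))
        + (∑ l ∈ Finset.range (p + 1),
          (p.choose l : ℝ) • (tDm^[l] B z).mulVec (tDv^[p - l] w z))
      = tDv^[p] g z := by
  intro z hz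
  have hS1 : SmV U (fun ζ => (A0 ζ).mulVec (tDv w ζ)) := hA0.mulVecV (hw.tDv' hU)
  have hS2 : SmV U (fun ζ => ∑ j : Fin 3, (A j ζ.2).mulVec (px j w ζ)) :=
    SmV.sumV (fun j _ => (smv_constA (A j) (hA j)).mulVecV (hw.px' hU j))
  have hS3 : SmV U (fun ζ => (B ζ).mulVec (w ζ)) := hB.mulVecV hw
  have h0 := tDv_iter_congr hU hpde p z hz
  rw [← h0,
    tDv_iter_addV hU (hS1.addV hS2) hS3 p z hz,
    tDv_iter_addV hU hS1 hS2 p z hz,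
    tDv_iter_mulVec hU hA0 (hw.tDv' hU) p z hz,
    tDv_iter_mulVec hU hB hw p z hz,
    tDv_iter_sumV hU Finset.univ
      (fun j _ => (smv_constA (A j) (hA j)).mulVecV (hw.px' hU j)) p z hz]
  congr 1
  congr 1
  · exact Finset.sum_congr rfl fun l hlm => by
      rw [← Function.iterate_succ_apply tDv (p - l) w,
        show (p - l).succ = p + 1 - l by
          have := Finset.mem_range.1 hlm; omega]
  · exact Finset.sum_congr rfl fun j _ => by
      rw [tDv_iter_const_mulVec hU (A j) (hA j) (hw.px' hU j) p z hz,
        tDv_iter_px hU j hw p z hz]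


/-- `S_p` recovers the iterated time derivatives of a smooth solution. -/
lemma key (I : Set ℝ) (hI : IsOpen I) (t₀ : ℝ) (ht₀ : t₀ ∈ I)
    (A0 : EE → Matrix (Fin 6) (Fin 6) ℝ)
    (A : Fin 3 → (Fin 3 → ℝ) → Matrix (Fin 6) (Fin 6) ℝ)
    (hA0 : SmM (I ×ˢ (Set.univ : Set (Fin 3 → ℝ))) A0)
    (hA : ∀ j : Fin 3, ∀ a b : Fin 6, ContDiff ℝ ∞ fun x => A j x a b)
    (hA0inv : ∀ x : Fin 3 → ℝ, IsUnit (A0 (t₀, x)))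
    (B : EE → Matrix (Fin 6) (Fin 6) ℝ) (g w : EE → Fin 6 → ℝ)
    (hB : SmM (I ×ˢ (Set.univ : Set (Fin 3 → ℝ))) B)
    (hg : SmV (I ×ˢ (Set.univ : Set (Fin 3 → ℝ))) g)
    (hw : SmV (I ×ˢ (Set.univ : Set (Fin 3 → ℝ))) w)
    (hpde : ∀ z ∈ I ×ˢ (Set.univ : Set (Fin 3 → ℝ)), (A0 z).mulVec (tDv w z)
      + (∑ j : Fin 3, (A j z.2).mulVec (px j w z)) + (B z).mulVec (w z) = g z)
    (T : ℕ → (Fin 3 → ℝ) → Fin 6 → ℝ)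
    (hT0 : T 0 = fun y => w (t₀, y))
    (hTrec : ∀ p : ℕ, ∀ x : Fin 3 → ℝ, T (p + 1) x =
      (A0 (t₀, x))⁻¹.mulVec
        (tDv^[p] g (t₀, x)
          - (∑ j : Fin 3, (A j x).mulVec (sDv j (T p) x))
          - (∑ l ∈ Finset.Icc 1 p,
              (p.choose l : ℝ) • (tDm^[l] A0 (t₀, x)).mulVec (T (p + 1 - l) x))
          - (∑ l ∈ Finset.range (p + 1),
              (p.choose l : ℝ) • (tDm^[l] B (t₀, x)).mulVec (T (p - l) x)))) :
    ∀ p : ℕ, ∀ x : Fin 3 → ℝ, T p x = tDv^[p] w (t₀, x) := by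
  have hU : IsOpen (I ×ˢ (Set.univ : Set (Fin 3 → ℝ))) := hI.prod isOpen_univ
  intro p
  induction p using Nat.strong_induction_on with
  | _ p ih =>
    match p with
    | 0 => intro x; rw [hT0]; rfl
    | (q + 1) =>
      intro x
      have hz : ((t₀ : ℝ), x) ∈ I ×ˢ (Set.univ : Set (Fin 3 → ℝ)) := ⟨ht₀, trivial⟩
      rw [hTrec q x]
      have e1 : (∑ j : Fin 3, (A j x).mulVec (sDv j (T q) x))
          = ∑ j : Fin 3, (A j x).mulVec (px j (tDv^[q] w) (t₀, x)) := by
        refine Finset.sum_congr rfl fun j _ => ?_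
        rw [show T q = fun y => tDv^[q] w (t₀, y) from
            funext (fun y => ih q (by omega) y),
          sDv_slice hU j (hw.tDv_iter hU q) t₀ x hz]
      have e2 : (∑ l ∈ Finset.Icc 1 q,
            (q.choose l : ℝ) • (tDm^[l] A0 (t₀, x)).mulVec (T (q + 1 - l) x))
          = ∑ l ∈ Finset.Icc 1 q,
            (q.choose l : ℝ) • (tDm^[l] A0 (t₀, x)).mulVec (tDv^[q + 1 - l] w (t₀, x)) := by
        refine Finset.sum_congr rfl fun l hl => ?_
        rw [ih (q + 1 - l) (by simp [Finset.mem_Icc] at hl; omega) x]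
      have e3 : (∑ l ∈ Finset.range (q + 1),
            (q.choose l : ℝ) • (tDm^[l] B (t₀, x)).mulVec (T (q - l) x))
          = ∑ l ∈ Finset.range (q + 1),
            (q.choose l : ℝ) • (tDm^[l] B (t₀, x)).mulVec (tDv^[q - l] w (t₀, x)) := by
        refine Finset.sum_congr rfl fun l hl => ?_
        rw [ih (q - l) (by omega) x]
      have hP := pde_iter hU A0 B g w A hA0 hB hg hw hA hpde q ((t₀ : ℝ), x) hz
      nth_rewrite 1 [show Finset.range (q + 1) = insert 0 (Finset.Icc 1 q) by
        ext m; simp; omega] at hP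
      rw [Finset.sum_insert (by simp)] at hP
      simp only [Function.iterate_zero, id_eq, Nat.choose_zero_right, Nat.cast_one,
        one_smul, Nat.sub_zero] at hP
      have hstep : tDv^[q] g (t₀, x)
          - (∑ j : Fin 3, (A j x).mulVec (px j (tDv^[q] w) (t₀, x)))
          - (∑ l ∈ Finset.Icc 1 q,
              (q.choose l : ℝ) • (tDm^[l] A0 (t₀, x)).mulVec (tDv^[q + 1 - l] w (t₀, x)))
          - (∑ l ∈ Finset.range (q + 1),
              (q.choose l : ℝ) • (tDm^[l] B (t₀, x)).mulVec (tDv^[q - l] w (t₀, x)))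
          = (A0 (t₀, x)).mulVec (tDv^[q + 1] w (t₀, x)) := by
        rw [← hP]; abel
      rw [e1, e2, e3, hstep, inv_mulVec_cancel (hA0inv x)]

end SShiftAux



/-- for a smooth solution `u` of the first order system, the
operators `S_p` of different orders are related by
`S_p(t₀,A₀,…,A₃,∂ₜA₀+D,f₁,u₁) = S_{p+1}(t₀,A₀,…,A₃,D,f,u(t₀,·))`, where
`u₁ = S₁(t₀,A₀,…,A₃,D,f,u(t₀,·))` and `f₁ = ∂ₜf − (∂ₜD)u`. -/
theorem S_operators_shift
    (I : Set ℝ) (hI : IsOpen I) (t₀ : ℝ) (ht₀ : t₀ ∈ I)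
    (A0 D : ℝ × (Fin 3 → ℝ) → Matrix (Fin 6) (Fin 6) ℝ)
    (f : ℝ × (Fin 3 → ℝ) → Fin 6 → ℝ)
    (A : Fin 3 → (Fin 3 → ℝ) → Matrix (Fin 6) (Fin 6) ℝ)
    (u : ℝ × (Fin 3 → ℝ) → Fin 6 → ℝ)
    (hA0 : ∀ i j : Fin 6,
      ContDiffOn ℝ (⊤ : ℕ∞) (fun z => A0 z i j) (I ×ˢ (Set.univ : Set (Fin 3 → ℝ))))
    (hD : ∀ i j : Fin 6,
      ContDiffOn ℝ (⊤ : ℕ∞) (fun z => D z i j) (I ×ˢ (Set.univ : Set (Fin 3 → ℝ))))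
    (hf : ContDiffOn ℝ (⊤ : ℕ∞) f (I ×ˢ (Set.univ : Set (Fin 3 → ℝ))))
    (hA : ∀ j : Fin 3, ∀ a b : Fin 6, ContDiff ℝ (⊤ : ℕ∞) fun x => A j x a b)
    (hA0inv : ∀ t ∈ I, ∀ x : Fin 3 → ℝ, IsUnit (A0 (t, x)))
    (hu : ContDiffOn ℝ (⊤ : ℕ∞) u (I ×ˢ (Set.univ : Set (Fin 3 → ℝ))))
    (hsol : ∀ t ∈ I, ∀ x : Fin 3 → ℝ,
      (A0 (t, x)).mulVec (tDv u (t, x))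
        + (∑ j : Fin 3, (A j x).mulVec (px j u (t, x)))
        + (D (t, x)).mulVec (u (t, x)) = f (t, x))
    -- the operators `S_p(t₀, A₀, A₁, A₂, A₃, D', f', u₀')`, defined
    -- recursively for arbitrary data `(D', f', u₀')`:
    (S : (ℝ × (Fin 3 → ℝ) → Matrix (Fin 6) (Fin 6) ℝ) →
         (ℝ × (Fin 3 → ℝ) → Fin 6 → ℝ) →
         ((Fin 3 → ℝ) → Fin 6 → ℝ) → ℕ → (Fin 3 → ℝ) → Fin 6 → ℝ)
    (hS0 : ∀ D' f' u₀', S D' f' u₀' 0 = u₀')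
    (hSrec : ∀ D' f' u₀', ∀ p : ℕ, ∀ x : Fin 3 → ℝ, S D' f' u₀' (p + 1) x =
      (A0 (t₀, x))⁻¹.mulVec
        (tDv^[p] f' (t₀, x)
          - (∑ j : Fin 3, (A j x).mulVec (sDv j (S D' f' u₀' p) x))
          - (∑ l ∈ Finset.Icc 1 p,
              (p.choose l : ℝ) •
                (tDm^[l] A0 (t₀, x)).mulVec (S D' f' u₀' (p + 1 - l) x))
          - (∑ l ∈ Finset.range (p + 1),
              (p.choose l : ℝ) •
                (tDm^[l] D' (t₀, x)).mulVec (S D' f' u₀' (p - l) x)))) :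
    ∀ p : ℕ, ∀ x : Fin 3 → ℝ,
      S (fun z => tDm A0 z + D z)
        (fun z => tDv f z - (tDm D z).mulVec (u z))
        (S D f (fun y => u (t₀, y)) 1) p x
      = S D f (fun y => u (t₀, y)) (p + 1) x := by
  have hU : IsOpen (I ×ˢ (Set.univ : Set (Fin 3 → ℝ))) := hI.prod isOpen_univ
  have hA0' : SShiftAux.SmM (I ×ˢ (Set.univ : Set (Fin 3 → ℝ))) A0 :=
    fun i j => (hA0 i j).of_le (by simp)
  have hD' : SShiftAux.SmM (I ×ˢ (Set.univ : Set (Fin 3 → ℝ))) D :=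
    fun i j => (hD i j).of_le (by simp)
  have hA' : ∀ j : Fin 3, ∀ a b : Fin 6, ContDiff ℝ ∞ fun x => A j x a b :=
    fun j a b => (hA j a b).of_le (by simp)
  have hf' : SShiftAux.SmV (I ×ˢ (Set.univ : Set (Fin 3 → ℝ))) f := fun i =>
    (((ContinuousLinearMap.proj i : (Fin 6 → ℝ) →L[ℝ] ℝ).contDiff).comp_contDiffOn hf).of_le
      (by simp)
  have hu' : SShiftAux.SmV (I ×ˢ (Set.univ : Set (Fin 3 → ℝ))) u := fun i =>
    (((ContinuousLinearMap.proj i : (Fin 6 → ℝ) →L[ℝ] ℝ).contDiff).comp_contDiffOn hu).of_le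
      (by simp)
  have hpde : ∀ z ∈ I ×ˢ (Set.univ : Set (Fin 3 → ℝ)), (A0 z).mulVec (tDv u z)
      + (∑ j : Fin 3, (A j z.2).mulVec (px j u z)) + (D z).mulVec (u z) = f z :=
    fun z hz => hsol z.1 hz.1 z.2
  have keyA := SShiftAux.key I hI t₀ ht₀ A0 A hA0' hA' (fun x => hA0inv t₀ ht₀ x)
    D f u hD' hf' hu' hpde (fun p => S D f (fun y => u (t₀, y)) p)
    (hS0 D f _) (fun p x => hSrec D f _ p x)
  -- the shifted system
  have hB1 : SShiftAux.SmM (I ×ˢ (Set.univ : Set (Fin 3 → ℝ)))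
      (fun z => tDm A0 z + D z) := (hA0'.tDm' hU).addM hD'
  have hg1 : SShiftAux.SmV (I ×ˢ (Set.univ : Set (Fin 3 → ℝ)))
      (fun z => tDv f z - (tDm D z).mulVec (u z)) :=
    SShiftAux.SmV.subV (hf'.tDv' hU) ((hD'.tDm' hU).mulVecV hu')
  have hw1 : SShiftAux.SmV (I ×ˢ (Set.univ : Set (Fin 3 → ℝ))) (tDv u) := hu'.tDv' hU
  have hpde1 : ∀ z ∈ I ×ˢ (Set.univ : Set (Fin 3 → ℝ)),
      (A0 z).mulVec (tDv (tDv u) z)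
        + (∑ j : Fin 3, (A j z.2).mulVec (px j (tDv u) z))
        + ((fun z => tDm A0 z + D z) z).mulVec (tDv u z)
      = (fun z => tDv f z - (tDm D z).mulVec (u z)) z := by
    intro z hz
    have h := SShiftAux.tDv_congr hU hz
      (F := fun ζ => (A0 ζ).mulVec (tDv u ζ)
        + (∑ j : Fin 3, (A j ζ.2).mulVec (px j u ζ)) + (D ζ).mulVec (u ζ)) (G := f) hpde
    rw [SShiftAux.tDv_addV hU hz
        ((hA0'.mulVecV (hu'.tDv' hU)).addV (SShiftAux.SmV.sumV (fun j _ =>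
          (SShiftAux.smv_constA (A j) (hA' j)).mulVecV (hu'.px' hU j))))
        (hD'.mulVecV hu'),
      SShiftAux.tDv_addV hU hz (hA0'.mulVecV (hu'.tDv' hU))
        (SShiftAux.SmV.sumV (fun j _ =>
          (SShiftAux.smv_constA (A j) (hA' j)).mulVecV (hu'.px' hU j))),
      SShiftAux.tDv_mulVec hU hz hA0' (hu'.tDv' hU),
      SShiftAux.tDv_mulVec hU hz hD' hu',
      SShiftAux.tDv_sumV hU hz Finset.univ (fun j _ =>
        (SShiftAux.smv_constA (A j) (hA' j)).mulVecV (hu'.px' hU j)),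
      Finset.sum_congr rfl (fun j _ => by
        rw [SShiftAux.tDv_const_mulVec hU hz (A j) (hA' j) (hu'.px' hU j),
          SShiftAux.tDv_px hU hz j hu'])] at h
    show _ = tDv f z - (tDm D z).mulVec (u z)
    rw [Matrix.add_mulVec, eq_sub_iff_add_eq, ← h]
    abel
  have hu1 : S D f (fun y => u (t₀, y)) 1 = fun y => tDv u (t₀, y) :=
    funext fun y => (keyA 1 y).trans (by rw [Function.iterate_one])
  have keyB := SShiftAux.key I hI t₀ ht₀ A0 A hA0' hA' (fun x => hA0inv t₀ ht₀ x)
    (fun z => tDm A0 z + D z) (fun z => tDv f z - (tDm D z).mulVec (u z)) (tDv u)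
    hB1 hg1 hw1 hpde1
    (fun p => S (fun z => tDm A0 z + D z) (fun z => tDv f z - (tDm D z).mulVec (u z))
      (S D f (fun y => u (t₀, y)) 1) p)
    ((hS0 _ _ _).trans hu1) (fun p x => hSrec _ _ _ p x)
  intro p x
  have h2 : tDv^[p] (tDv u) (t₀, x) = tDv^[p + 1] u (t₀, x) := by
    rw [Function.iterate_succ_apply]
  exact (keyB p x).trans (h2.trans ((keyA (p + 1) x).symm))

end
end
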